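/- arXiv:1803.06539 — 8 statements merged into one kernel-verified Lean document; each statement's English description precedes it below -/
import Mathlib

section
/- Let f₁ : X₁ → X₁ and f₂ : X₂ → X₂ be functions on finite sets, θ : X₁ → X₁ a bijection commuting with f₁, and φ : X₁ → X₂ a map with φ ∘ f₁ = f₂ ∘ φ such that for every a ∈ X₂ the fiber φ⁻¹(a) is a single θ-orbit. Then a point α ∈ X₁ is periodic for f₁ if and only if φ(α) is periodic for f₂. -/
/-!
The forward direction holds for any semiconjugacy. Conversely, if `f₂^[m]` fixes `φ α`, then
`α` and `f₁^[m] α` lie in the same fibre of `φ`, hence in the same `θ`-orbit: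
`f₁^[m] α = σ α` with `σ = θ ^ i`. Since `σ` commutes with `f₁`, iterating gives
`f₁^[m * j] α = σ^[j] α`, and `j = orderOf σ`, which is positive because `X₁` is finite,
makes this `α`.
-/

/-- A point is periodic for `f` if some positive iterate of `f` fixes it. -/
def IsPerPt {X : Type*} (f : X → X) (x : X) : Prop := ∃ k > 0, f^[k] x = x

open Function Equiv

namespace Equiv.Perm

variable {X : Type*}

def commutingPerms (f : X → X) : Subgroup (Perm X) where
  carrier := {σ | Function.Commute σ f}
  mul_mem' hσ hτ := hσ.comp_left hτ
  one_mem' := Function.Commute.id_left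
  inv_mem' {σ} hσ := Semiconj.inverse_left hσ σ.left_inv σ.right_inv

theorem commute_zpow {σ : Perm X} {f : X → X} (h : Function.Commute σ f) (i : ℤ) :
    Function.Commute ⇑(σ ^ i) f :=
  (commutingPerms f).zpow_mem (show σ ∈ commutingPerms f from h) i

theorem sameCycle_of_fiber_eq_orbit {Y : Type*} {θ : Perm X} {φ : X → Y}
    (hfib : ∀ a : Y, ∃ β : X, φ ⁻¹' {a} = {x | ∃ i : ℤ, (θ ^ i) β = x})
    {x y : X} (hxy : φ x = φ y) : θ.SameCycle x y := by
  obtain ⟨β, hβ⟩ := hfib (φ x)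
  have hx : θ.SameCycle β x := hβ.subset (Set.mem_singleton _)
  have hy : θ.SameCycle β y := hβ.subset (Set.mem_singleton_iff.mpr hxy.symm)
  exact hx.symm.trans hy

theorem isPerPt_of_sameCycle_iterate [Finite X] {θ : Perm X} {f : X → X}
    (hθ : Function.Commute θ f) {m : ℕ} (hm : 0 < m) {x : X} (h : θ.SameCycle x (f^[m] x)) : IsPerPt f x := by
  obtain ⟨i, hi⟩ := h
  set σ := θ ^ i
  have hiter : (f^[m])^[orderOf σ] x = σ^[orderOf σ] x :=
    ((commute_zpow hθ i).symm.iterate_left m).iterate_eq_of_map_eq _ hi.symm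
  refine ⟨m * orderOf σ, Nat.mul_pos hm (orderOf_pos σ), ?_⟩
  rw [iterate_mul, hiter, ← coe_pow, pow_orderOf_eq_one, coe_one, id]

end Equiv.Perm

theorem covering_periodic_iff_general {X₁ X₂ : Type*} [Finite X₁]
    (f₁ : X₁ → X₁) (f₂ : X₂ → X₂) (θ : Equiv.Perm X₁) (φ : X₁ → X₂)
    (hθ : ∀ x, θ (f₁ x) = f₁ (θ x))
    (hφ : φ ∘ f₁ = f₂ ∘ φ)
    (hfib : ∀ a : X₂, ∃ α : X₁, φ ⁻¹' {a} = {x | ∃ i : ℤ, (θ ^ i) α = x})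
    (α : X₁) :
    IsPerPt f₁ α ↔ IsPerPt f₂ (φ α) := by
  have hsemi : Semiconj φ f₁ f₂ := semiconj_iff_comp_eq.mpr hφ
  refine ⟨fun h ↦ hsemi.mapsTo_periodicPts h, fun ⟨m, hm, hfix⟩ ↦ ?_⟩
  have hfiber : φ α = φ (f₁^[m] α) := by rw [(hsemi.iterate_right m).eq, hfix]
  exact Perm.isPerPt_of_sameCycle_iterate hθ hm (Perm.sameCycle_of_fiber_eq_orbit hfib hfiber)

/-- Let `f₁ : X₁ → X₁`, `f₂ : X₂ → X₂` be functions on finite sets, `θ` a bijection of `X₁`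
commuting with `f₁`, and `φ` a map with `φ ∘ f₁ = f₂ ∘ φ` such that every fiber of `φ`
is a single `θ`-orbit. Then `α` is periodic for `f₁` iff `φ α` is periodic for `f₂`. -/
theorem covering_periodic_iff {X₁ X₂ : Type*} [Finite X₁] [Finite X₂]
    (f₁ : X₁ → X₁) (f₂ : X₂ → X₂) (θ : Equiv.Perm X₁) (φ : X₁ → X₂)
    (hθ : ∀ x, θ (f₁ x) = f₁ (θ x))
    (hφ : φ ∘ f₁ = f₂ ∘ φ)
    (hfib : ∀ a : X₂, ∃ α : X₁, φ ⁻¹' {a} = {x | ∃ i : ℤ, (θ ^ i) α = x})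
    (α : X₁) :
    IsPerPt f₁ α ↔ IsPerPt f₂ (φ α) :=
  covering_periodic_iff_general f₁ f₂ θ φ hθ hφ hfib α
end

section
/- Let f₁ : X₁ → X₁, f₂ : X₂ → X₂ be functions on finite sets, θ a bijection of X₁ commuting with f₁, and φ : X₁ → X₂ a θ-covering (φ ∘ f₁ = f₂ ∘ φ and every fiber of φ is a θ-orbit). Then for every α ∈ X₁, φ maps the predecessor set of α onto the predecessor set of φ(α). -/
/-- The predecessor set of `α` under `f`: non-periodic points that iterate to `α`,
together with `α` itself. -/
def predSet {X : Type*} (f : X → X) (α : X) : Set X :=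
  insert α {y | ¬ IsPerPt f y ∧ ∃ k > 0, f^[k] y = α}

/-!
Since `φ` semiconjugates `f₁` to `f₂`, it maps `predSet f₁ α` into `predSet f₂ (φ α)` once we
know that `φ` reflects periodicity, and it is onto once iterate-preimages lift. Both use that the
fibres are `θ`-orbits and that `θ` commutes with `f₁`. If `f₂^[m] (φ y) = φ y`, then
`f₁^[m] y = (θ ^ i) y` for some `i`, so `f₁^[m * n] y = y` with `n` the order of `θ ^ i`.
If `f₂^[k] b = φ α`, take any `γ` over `b`: then `(θ ^ i) (f₁^[k] γ) = α` for some `i`, and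
`(θ ^ i) γ` lies over `b` and is sent to `α` by `f₁^[k]`.
-/

open Function Equiv

section

variable {X : Type*} {f : X → X}

theorem Function.Commute.perm_zpow_left {g : Perm X} (h : Function.Commute g f) (i : ℤ) :
    Function.Commute ⇑(g ^ i) f := by
  have hinv : Function.Commute ⇑g⁻¹ f := h.inverse_left g.left_inv g.right_inv
  obtain ⟨n, rfl | rfl⟩ := i.eq_nat_or_neg
  · rw [zpow_natCast, Perm.coe_pow]
    exact h.iterate_left n
  · rw [zpow_neg, zpow_natCast, ← inv_pow, Perm.coe_pow]
    exact hinv.iterate_left n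

theorem Function.Commute.iterate_apply_eq_of_apply_eq {F G : X → X} (h : Function.Commute F G)
    {y : X} (hy : F y = G y) (n : ℕ) : F^[n] y = G^[n] y := by
  induction n with
  | zero => rfl
  | succ n ih => rw [iterate_succ_apply, hy, (h.iterate_left n).eq, ih, iterate_succ_apply']

theorem isPerPt_of_iterate_eq_perm [Finite X] {g : Perm X} (hg : Function.Commute g f)
    {m : ℕ} (hm : 0 < m) {y : X} (h : f^[m] y = g y) : IsPerPt f y := by
  refine ⟨m * orderOf g, Nat.mul_pos hm (orderOf_pos g), ?_⟩
  rw [iterate_mul, (hg.iterate_right m).symm.iterate_apply_eq_of_apply_eq h, ← Perm.coe_pow,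
    pow_orderOf_eq_one, Perm.coe_one, id]

end

section

variable {X₁ X₂ : Type*} {θ : Perm X₁} {φ : X₁ → X₂}
  (hfib : ∀ a : X₂, ∃ α : X₁, φ ⁻¹' {a} = {x | ∃ i : ℤ, (θ ^ i) α = x})
include hfib

theorem surjective_of_fiber_eq_orbit : Surjective φ := fun a ↦ by
  obtain ⟨α, hα⟩ := hfib a
  exact ⟨α, show α ∈ φ ⁻¹' {a} from hα ▸ ⟨0, rfl⟩⟩

theorem map_eq_map_iff_sameCycle {x y : X₁} : φ x = φ y ↔ θ.SameCycle x y := by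
  obtain ⟨β, hβ⟩ := hfib (φ x)
  have mem (z : X₁) : φ z = φ x ↔ θ.SameCycle β z := Set.ext_iff.1 hβ z
  have hx := (mem x).1 rfl
  exact ⟨fun h ↦ hx.symm.trans ((mem y).1 h.symm), fun h ↦ ((mem y).2 (hx.trans h)).symm⟩

variable {f₁ : X₁ → X₁} {f₂ : X₂ → X₂} (hθ : Function.Commute θ f₁) (hφ : Semiconj φ f₁ f₂)
include hθ hφ

theorem isPerPt_map_iff [Finite X₁] {y : X₁} : IsPerPt f₂ (φ y) ↔ IsPerPt f₁ y := by
  refine ⟨fun ⟨m, hm, hmy⟩ ↦ ?_, fun hy ↦ hφ.mapsTo_periodicPts hy⟩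
  obtain ⟨i, hi⟩ := (map_eq_map_iff_sameCycle hfib).1 ((hφ.iterate_right m y).trans hmy).symm
  exact isPerPt_of_iterate_eq_perm (hθ.perm_zpow_left i) hm hi.symm

theorem exists_map_eq_and_iterate_eq {b : X₂} {α : X₁} {k : ℕ} (h : f₂^[k] b = φ α) :
    ∃ y, φ y = b ∧ f₁^[k] y = α := by
  obtain ⟨γ, rfl⟩ := surjective_of_fiber_eq_orbit hfib b
  obtain ⟨i, hi⟩ := (map_eq_map_iff_sameCycle hfib).1 ((hφ.iterate_right k γ).trans h)
  exact ⟨(θ ^ i) γ, ((map_eq_map_iff_sameCycle hfib).2 ⟨i, rfl⟩).symm,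
    (((hθ.perm_zpow_left i).iterate_right k) γ).symm.trans hi⟩

end

theorem covering_maps_pred_onto_pred_general {X₁ X₂ : Type*} [Finite X₁]
    (f₁ : X₁ → X₁) (f₂ : X₂ → X₂) (θ : Equiv.Perm X₁) (φ : X₁ → X₂)
    (hθ : ∀ x, θ (f₁ x) = f₁ (θ x))
    (hφ : φ ∘ f₁ = f₂ ∘ φ)
    (hfib : ∀ a : X₂, ∃ α : X₁, φ ⁻¹' {a} = {x | ∃ i : ℤ, (θ ^ i) α = x})
    (α : X₁) :
    φ '' predSet f₁ α = predSet f₂ (φ α) := by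
  have hsc : Semiconj φ f₁ f₂ := semiconj_iff_comp_eq.2 hφ
  have hper (y : X₁) := isPerPt_map_iff hfib hθ hsc (y := y)
  ext b
  constructor
  · rintro ⟨y, rfl | ⟨hy, k, hk, rfl⟩, rfl⟩
    · exact Set.mem_insert _ _
    · exact Or.inr ⟨(hper y).not.2 hy, k, hk, (hsc.iterate_right k y).symm⟩
  · rintro (rfl | ⟨hb, k, hk, hkb⟩)
    · exact ⟨α, Set.mem_insert _ _, rfl⟩
    · obtain ⟨y, rfl, hy⟩ := exists_map_eq_and_iterate_eq hfib hθ hsc hkb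
      exact ⟨y, Or.inr ⟨(hper y).not.1 hb, k, hk, hy⟩, rfl⟩

/-- Let `f₁ : X₁ → X₁`, `f₂ : X₂ → X₂` be functions on finite sets, `θ` a bijection of
`X₁` commuting with `f₁`, and `φ : X₁ → X₂` a `θ`-covering (`φ ∘ f₁ = f₂ ∘ φ` and every
fiber of `φ` is a single `θ`-orbit). Then for every `α ∈ X₁`, `φ` maps the predecessor
set of `α` onto the predecessor set of `φ α`. -/
theorem covering_maps_pred_onto_pred {X₁ X₂ : Type*} [Finite X₁] [Finite X₂]
    (f₁ : X₁ → X₁) (f₂ : X₂ → X₂) (θ : Equiv.Perm X₁) (φ : X₁ → X₂)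
    (hθ : ∀ x, θ (f₁ x) = f₁ (θ x))
    (hφ : φ ∘ f₁ = f₂ ∘ φ)
    (hfib : ∀ a : X₂, ∃ α : X₁, φ ⁻¹' {a} = {x | ∃ i : ℤ, (θ ^ i) α = x})
    (α : X₁) :
    φ '' predSet f₁ α = predSet f₂ (φ α) :=
  covering_maps_pred_onto_pred_general f₁ f₂ θ φ hθ hφ hfib α
end

section
/- Let q be a prime power, n a positive integer, α ∈ F_{q²}* with α + α⁻¹ ∈ F_q, and let ord(α) = u·d be the factorization with rad(u) dividing rad(n) and gcd(d, n) = 1. Then the element a = α + α⁻¹ has, under iteration of the Chebyshev map T_n on F_q, period equal to the order of n in (ℤ/dℤ)*/{±1} and preperiod equal to the least k ≥ 0 with u dividing n^k. -/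
private lemma aux_dvd_pow (u n : ℕ) (hu0 : u ≠ 0) (hn : 0 < n)
    (h : ∀ p, p.Prime → p ∣ u → p ∣ n) : u ∣ n ^ u := by
  rw [← Nat.factorization_le_iff_dvd hu0 (pow_ne_zero _ hn.ne')]
  intro p
  rw [Nat.factorization_pow]
  simp only [Finsupp.coe_smul, Pi.smul_apply, smul_eq_mul]
  by_cases hp : p.Prime
  · by_cases hpu : p ∣ u
    · have h1 : 1 ≤ n.factorization p :=
        hp.factorization_pos_of_dvd hn.ne' (h p hp hpu)
      calc u.factorization p ≤ u := (Nat.factorization_lt p hu0).le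
        _ = u * 1 := (mul_one u).symm
        _ ≤ u * n.factorization p := Nat.mul_le_mul_left u h1
    · simp [Nat.factorization_eq_zero_of_not_dvd hpu]
  · simp [Nat.factorization_eq_zero_of_not_prime _ hp]

private lemma aux_mem_zpowers_neg_one (d : ℕ) (y : (ZMod d)ˣ) :
    y ∈ Subgroup.zpowers (-1 : (ZMod d)ˣ) ↔ y = 1 ∨ y = -1 := by
  constructor
  · rintro ⟨z, rfl⟩
    have h2 : (-1 : (ZMod d)ˣ) ^ (2 : ℤ) = 1 := by rw [zpow_two]; simp
    rcases Int.even_or_odd z with hz | hz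
    · obtain ⟨m, rfl⟩ := hz
      left
      show (-1 : (ZMod d)ˣ) ^ (m + m) = 1
      rw [← two_mul, zpow_mul, h2, one_zpow]
    · obtain ⟨m, rfl⟩ := hz
      right
      show (-1 : (ZMod d)ˣ) ^ (2 * m + 1) = -1
      rw [zpow_add, zpow_mul, h2, one_zpow, zpow_one, one_mul]
  · rintro (rfl | rfl)
    · exact one_mem _
    · exact Subgroup.mem_zpowers _

private lemma aux_add_inv_eq {F : Type*} [Field F] (β γ : F) (hβ : β ≠ 0) (hγ : γ ≠ 0) :
    β + β⁻¹ = γ + γ⁻¹ ↔ β = γ ∨ β * γ = 1 := by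
  constructor
  · intro h
    have h2 : (β - γ) * (β * γ - 1) = 0 := by
      field_simp at h
      linear_combination h
    rcases mul_eq_zero.1 h2 with h3 | h3
    · left; exact sub_eq_zero.1 h3
    · right; exact sub_eq_zero.1 h3
  · rintro (rfl | h)
    · rfl
    · have hγβ : γ = β⁻¹ := eq_inv_of_mul_eq_one_right h
      subst hγβ
      rw [inv_inv, add_comm]

set_option maxHeartbeats 1000000 in
/-- Let `F` be a field with `q²` elements, `α ∈ F*` with `a = α + α⁻¹` in the subfield
`F_q`, and let `ord(α) = u·d` be the `n`-decomposition of the multiplicative order of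
`α` (every prime of `u` divides `n`, and `gcd(d, n) = 1`).  Then under iteration of the
Chebyshev map `T_n` on `F_q`, the preperiod of `a` is the least `k ≥ 0` with `u ∣ nᵏ`
and the period of `a` is the order of `n` in `(ℤ/dℤ)ˣ/{±1}`. -/
theorem chebyshev_period_preperiod (n q : ℕ) (hn : 0 < n)
    (F : Type*) [Field F] [Fintype F] (hF : Fintype.card F = q ^ 2)
    (α : F) (hα : α ≠ 0) (ha : (α + α⁻¹) ^ q = α + α⁻¹)
    (u d : ℕ) (hud : orderOf α = u * d)
    (hu : ∀ p : ℕ, p.Prime → p ∣ u → p ∣ n) (hcop : Nat.Coprime n d) :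
    letI f : F → F := fun x => (Polynomial.dickson 1 (1 : F) n).eval x
    letI a : F := α + α⁻¹
    letI π : ℕ := orderOf
      (QuotientGroup.mk (ZMod.unitOfCoprime n hcop) :
        (ZMod d)ˣ ⧸ Subgroup.zpowers (-1 : (ZMod d)ˣ))
    letI ρ : ℕ := sInf {k : ℕ | u ∣ n ^ k}
    -- ρ is the preperiod of a: the least k such that f^[k] a is periodic
    IsLeast {k : ℕ | ∃ c > 0, f^[c + k] a = f^[k] a} ρ ∧
    -- π is the period of a: the least positive c with f^[c + ρ] a = f^[ρ] a
    IsLeast {c : ℕ | 0 < c ∧ f^[c + ρ] a = f^[ρ] a} π := by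
  set f : F → F := fun x => (Polynomial.dickson 1 (1 : F) n).eval x with hf
  set ρ : ℕ := sInf {k : ℕ | u ∣ n ^ k} with hρ
  -- orderOf α is positive
  have hord : 0 < orderOf α := by
    have : α = ((Units.mk0 α hα : Fˣ) : F) := rfl
    rw [this, orderOf_units]
    exact orderOf_pos _
  have hu0 : u ≠ 0 := by rintro rfl; rw [hud] at hord; simp at hord
  have hd0 : d ≠ 0 := by rintro rfl; rw [hud] at hord; simp at hord
  haveI : NeZero d := ⟨hd0⟩
  have huu : u ∣ n ^ u := aux_dvd_pow u n hu0 hn hu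
  have hne : Set.Nonempty {k : ℕ | u ∣ n ^ k} := ⟨u, huu⟩
  have hρmem : u ∣ n ^ ρ := Nat.sInf_mem hne
  have hudcop : Nat.Coprime u d :=
    Nat.Coprime.coprime_dvd_left huu (Nat.Coprime.pow_left u hcop)
  -- iterate formula
  have hαe : ∀ e : ℕ, α ^ e ≠ 0 := fun e => pow_ne_zero e hα
  have hiter : ∀ k : ℕ, f^[k] (α + α⁻¹) = α ^ (n ^ k) + (α ^ (n ^ k))⁻¹ := by
    intro k
    induction k with
    | zero => simp
    | succ k ih =>
      rw [Function.iterate_succ_apply', ih, hf]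
      simp only []
      rw [Polynomial.dickson_one_one_eval_add_inv _ _ (mul_inv_cancel₀ (hαe _)) n,
        inv_pow, ← pow_mul, ← pow_succ]
  set x : (ZMod d)ˣ := ZMod.unitOfCoprime n hcop with hx
  -- translating powers of the quotient class
  have hxpow : ∀ c : ℕ, 0 < c →
      (((QuotientGroup.mk x : (ZMod d)ˣ ⧸ Subgroup.zpowers (-1 : (ZMod d)ˣ)) ^ c = 1)
        ↔ (d ∣ n ^ c - 1 ∨ d ∣ n ^ c + 1)) := by
    intro c hc
    rw [← QuotientGroup.mk_pow, QuotientGroup.eq_one_iff, aux_mem_zpowers_neg_one]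
    have hcoe : ((x ^ c : (ZMod d)ˣ) : ZMod d) = ((n ^ c : ℕ) : ZMod d) := by
      push_cast [hx, ZMod.coe_unitOfCoprime]
      ring
    constructor
    · rintro (h1 | h1)
      · left
        have : ((n ^ c : ℕ) : ZMod d) = ((1 : ℕ) : ZMod d) := by
          rw [← hcoe, h1]; simp
        rw [ZMod.natCast_eq_natCast_iff] at this
        exact (Nat.modEq_iff_dvd' (Nat.one_le_pow _ _ hn)).1 this.symm
      · right
        have : ((n ^ c + 1 : ℕ) : ZMod d) = 0 := by
          push_cast
          rw [← Nat.cast_pow, ← hcoe, h1]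
          simp
        exact (ZMod.natCast_eq_zero_iff _ _).1 this
    · rintro (h1 | h1)
      · left
        ext
        rw [hcoe]
        have : (n:ℕ) ^ c ≡ 1 [MOD d] :=
          ((Nat.modEq_iff_dvd' (Nat.one_le_pow _ _ hn)).2 h1).symm
        have := (ZMod.natCast_eq_natCast_iff _ _ _).2 this
        simpa using this
      · right
        ext
        rw [hcoe]
        have : ((n ^ c + 1 : ℕ) : ZMod d) = 0 :=
          (ZMod.natCast_eq_zero_iff _ _).2 h1
        push_cast at this
        have h2 : ((n:ZMod d) ^ c) = -1 := by linear_combination this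
        simpa using h2
  -- the key equivalence
  have key : ∀ c k : ℕ, 0 < c →
      (f^[c + k] (α + α⁻¹) = f^[k] (α + α⁻¹) ↔
        (u ∣ n ^ k ∧ (QuotientGroup.mk x : (ZMod d)ˣ ⧸ Subgroup.zpowers
          (-1 : (ZMod d)ˣ)) ^ c = 1)) := by
    intro c k hc
    rw [hiter, hiter, aux_add_inv_eq _ _ (hαe _) (hαe _), hxpow c hc]
    have hAB : n ^ k ≤ n ^ (c + k) := Nat.pow_le_pow_right hn (Nat.le_add_left _ _)
    have e1 : α ^ n ^ (c + k) = α ^ n ^ k ↔ orderOf α ∣ n ^ (c + k) - n ^ k := by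
      rw [orderOf_dvd_iff_pow_eq_one]
      constructor
      · intro h
        have h2 : α ^ (n ^ (c + k) - n ^ k) * α ^ (n ^ k) = 1 * α ^ (n ^ k) := by
          rw [← pow_add, Nat.sub_add_cancel hAB, h, one_mul]
        exact mul_right_cancel₀ (hαe _) h2
      · intro h
        calc α ^ n ^ (c + k) = α ^ (n ^ (c + k) - n ^ k + n ^ k) := by
              rw [Nat.sub_add_cancel hAB]
          _ = α ^ (n ^ (c + k) - n ^ k) * α ^ n ^ k := pow_add α _ _
          _ = α ^ n ^ k := by rw [h, one_mul]
    have e2 : α ^ n ^ (c + k) * α ^ n ^ k = 1 ↔ orderOf α ∣ n ^ (c + k) + n ^ k := by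
      rw [← pow_add]
      exact orderOf_dvd_iff_pow_eq_one.symm
    rw [e1, e2, hud]
    have hsub : n ^ (c + k) - n ^ k = n ^ k * (n ^ c - 1) := by
      rw [pow_add, Nat.mul_sub, mul_comm (n ^ c), mul_one]
    have hadd : n ^ (c + k) + n ^ k = n ^ k * (n ^ c + 1) := by
      rw [pow_add]; ring
    rw [hsub, hadd]
    -- coprimality facts
    have hn1 : 1 ≤ n ^ c := Nat.one_le_pow _ _ hn
    have hcp1 : Nat.Coprime (n ^ c) (n ^ c - 1) := by
      have h := Nat.coprime_add_self_left.2 (Nat.coprime_one_left (n ^ c - 1))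
      rwa [add_comm, Nat.sub_add_cancel hn1] at h
    have hcp2 : Nat.Coprime (n ^ c) (n ^ c + 1) :=
      Nat.coprime_self_add_right.2 (Nat.coprime_one_right _)
    have hudvd : u ∣ (n ^ c) ^ u := huu.trans (pow_dvd_pow n (Nat.le_mul_of_pos_left u hc))
      |>.trans (by rw [← pow_mul, mul_comm])
    have hu1 : Nat.Coprime u (n ^ c - 1) :=
      Nat.Coprime.coprime_dvd_left hudvd (Nat.Coprime.pow_left _ hcp1)
    have hu2 : Nat.Coprime u (n ^ c + 1) :=
      Nat.Coprime.coprime_dvd_left hudvd (Nat.Coprime.pow_left _ hcp2)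
    have hdnk : Nat.Coprime d (n ^ k) := (Nat.Coprime.pow_left k hcop).symm
    constructor
    · rintro (h | h)
      · refine ⟨?_, Or.inl ?_⟩
        · exact hu1.dvd_of_dvd_mul_right ((dvd_mul_right u d).trans h)
        · exact hdnk.dvd_of_dvd_mul_left ((dvd_mul_left d u).trans h)
      · refine ⟨?_, Or.inr ?_⟩
        · exact hu2.dvd_of_dvd_mul_right ((dvd_mul_right u d).trans h)
        · exact hdnk.dvd_of_dvd_mul_left ((dvd_mul_left d u).trans h)
    · rintro ⟨h1, h2 | h2⟩
      · exact Or.inl (mul_dvd_mul h1 h2)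
      · exact Or.inr (mul_dvd_mul h1 h2)
  -- positivity of the period
  haveI : Finite ((ZMod d)ˣ ⧸ Subgroup.zpowers (-1 : (ZMod d)ˣ)) := Quotient.finite _
  have hπpos : 0 < (orderOf (QuotientGroup.mk x : (ZMod d)ˣ ⧸ Subgroup.zpowers (-1 : (ZMod d)ˣ))) := by
    exact orderOf_pos (QuotientGroup.mk x : (ZMod d)ˣ ⧸ Subgroup.zpowers (-1 : (ZMod d)ˣ))
  have hπ1 : (QuotientGroup.mk x : (ZMod d)ˣ ⧸ Subgroup.zpowers (-1 : (ZMod d)ˣ)) ^ (orderOf (QuotientGroup.mk x : (ZMod d)ˣ ⧸ Subgroup.zpowers (-1 : (ZMod d)ˣ))) = 1 :=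
    pow_orderOf_eq_one _
  constructor
  · constructor
    · exact ⟨(orderOf (QuotientGroup.mk x : (ZMod d)ˣ ⧸ Subgroup.zpowers (-1 : (ZMod d)ˣ))), hπpos, (key (orderOf (QuotientGroup.mk x : (ZMod d)ˣ ⧸ Subgroup.zpowers (-1 : (ZMod d)ˣ))) ρ hπpos).2 ⟨hρmem, hπ1⟩⟩
    · rintro k ⟨c, hc, hk⟩
      exact Nat.sInf_le ((key c k hc).1 hk).1
  · constructor
    · exact ⟨hπpos, (key (orderOf (QuotientGroup.mk x : (ZMod d)ˣ ⧸ Subgroup.zpowers (-1 : (ZMod d)ˣ))) ρ hπpos).2 ⟨hρmem, hπ1⟩⟩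
    · rintro c ⟨hc, hceq⟩
      exact orderOf_le_of_pow_eq_one hc ((key c ρ hc).1 hceq).2
end

section
/- Let q be a prime power, n a positive integer, and α ∈ F_{q²}* with a = α + α⁻¹ ∈ F_q. Then a is a periodic point of the Chebyshev map T_n : F_q → F_q if and only if gcd(ord(α), n) = 1, where ord(α) is the multiplicative order of α. -/
private lemma iter_dickson_eval (n : ℕ) {F : Type*} [Field F] (α : F) (hα : α ≠ 0) :
    ∀ k, (fun x : F => (Polynomial.dickson 1 (1 : F) n).eval x)^[k] (α + α⁻¹)
      = α ^ n ^ k + (α ^ n ^ k)⁻¹ := by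
  intro k
  induction k with
  | zero => simp
  | succ k ih =>
    rw [Function.iterate_succ_apply', ih]
    have hβ : α ^ n ^ k ≠ 0 := pow_ne_zero _ hα
    have := Polynomial.dickson_one_one_eval_add_inv (α ^ n ^ k) (α ^ n ^ k)⁻¹
      (mul_inv_cancel₀ hβ) n
    simp only [this]
    rw [← pow_mul, ← inv_pow, ← pow_mul, pow_succ, inv_pow]

private lemma add_inv_eq_iff {F : Type*} [Field F] {a b : F} (ha : a ≠ 0) (hb : b ≠ 0)
    (h : a + a⁻¹ = b + b⁻¹) : a = b ∨ a * b = 1 := by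
  have h' : (a - b) * (a * b - 1) = 0 := by
    field_simp at h
    linear_combination h
  rcases mul_eq_zero.mp h' with h1 | h1
  · exact Or.inl (sub_eq_zero.mp h1)
  · exact Or.inr (sub_eq_zero.mp h1)

/-- Let `F` be a field with `q²` elements and `α ∈ F*` with `a = α + α⁻¹` in the
subfield `F_q`.  Then `a` is a periodic point of the Chebyshev map `T_n : F_q → F_q`
if and only if the multiplicative order of `α` is coprime with `n`. -/
theorem chebyshev_periodic_iff_coprime (n q : ℕ) (hn : 0 < n)
    (F : Type*) [Field F] [Fintype F] (hF : Fintype.card F = q ^ 2)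
    (α : F) (hα : α ≠ 0) (ha : (α + α⁻¹) ^ q = α + α⁻¹) :
    (∃ k > 0, (fun x : F => (Polynomial.dickson 1 (1 : F) n).eval x)^[k] (α + α⁻¹)
        = α + α⁻¹) ↔
      Nat.Coprime (orderOf α) n := by
  set m := orderOf α with hm
  have hmpos : 0 < m := by
    rw [hm, ← Units.val_mk0 hα, orderOf_units]
    exact orderOf_pos _
  constructor
  · rintro ⟨k, hk, hiter⟩
    rw [iter_dickson_eval n α hα k] at hiter
    have hne : α ^ n ^ k ≠ 0 := pow_ne_zero _ hα
    rcases add_inv_eq_iff hne hα hiter with h1 | h1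
    · -- α ^ (n^k) = α, so m ∣ n^k - 1
      have h2 : α ^ (n ^ k) = α ^ 1 := by simpa using h1
      have hmod : n ^ k ≡ 1 [MOD m] := by
        have := (pow_eq_pow_iff_modEq (x := Units.mk0 α hα) (n := n ^ k) (m := 1)).1
          (by ext; simpa using h2)
        simpa [hm, ← orderOf_units, Units.val_mk0] using this
      -- gcd m n divides both n^k and 1
      have hd : Nat.gcd m n ∣ 1 := by
        have h3 : n ^ k ≡ 1 [MOD Nat.gcd m n] :=
          hmod.of_dvd (Nat.gcd_dvd_left m n)
        have h4 : n ^ k ≡ 0 [MOD Nat.gcd m n] :=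
          (Nat.modEq_zero_iff_dvd).2 (dvd_pow (Nat.gcd_dvd_right m n) hk.ne')
        have : (1 : ℕ) ≡ 0 [MOD Nat.gcd m n] := h3.symm.trans h4
        exact (Nat.modEq_zero_iff_dvd).1 this
      exact Nat.eq_one_of_dvd_one hd
    · -- α ^ (n^k) * α = 1, so m ∣ n^k + 1
      have h2 : α ^ (n ^ k + 1) = 1 := by rw [pow_succ]; exact h1
      have hdvd : m ∣ n ^ k + 1 := by
        have : (Units.mk0 α hα) ^ (n ^ k + 1) = 1 := by
          ext; simpa using h2
        have := orderOf_dvd_of_pow_eq_one this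
        simpa [hm, ← orderOf_units, Units.val_mk0] using this
      have hd : Nat.gcd m n ∣ 1 := by
        have h3 : Nat.gcd m n ∣ n ^ k + 1 := (Nat.gcd_dvd_left m n).trans hdvd
        have h4 : Nat.gcd m n ∣ n ^ k := dvd_pow (Nat.gcd_dvd_right m n) hk.ne'
        simpa using (Nat.dvd_sub h3 h4)
      exact Nat.eq_one_of_dvd_one hd
  · intro hcop
    refine ⟨Nat.totient m, Nat.totient_pos.2 hmpos, ?_⟩
    rw [iter_dickson_eval n α hα]
    have hmod : n ^ Nat.totient m ≡ 1 [MOD m] :=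
      Nat.ModEq.pow_totient (hcop.symm)
    have : α ^ (n ^ Nat.totient m) = α ^ 1 := by
      have := (pow_eq_pow_iff_modEq (x := Units.mk0 α hα) (n := n ^ Nat.totient m) (m := 1)).2
        (by simpa [hm, ← orderOf_units, Units.val_mk0] using hmod)
      simpa using congrArg Units.val this
    rw [this, pow_one]
end

section
/- Let G be a finite cyclic group of order m = νω where rad(ν) divides rad(n) and gcd(n, ω) = 1, and let r_n : G → G be the n-th power map. Then an element g ∈ G is r_n-periodic if and only if the order of g divides ω, and the number of r_n-periodic elements equals ω. -/
/-- Let `G` be a finite cyclic group of order `m = ν·ω`, where every prime dividing `ν`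
divides `n` and `gcd(n, ω) = 1`, and let `r_n : g ↦ gⁿ`.  Then `g` is `r_n`-periodic
(i.e. `g^(nᵏ) = g` for some `k ≥ 1`) iff the order of `g` divides `ω`, and the number
of `r_n`-periodic elements is `ω`. -/
theorem cyclic_power_map_periodic (n ν ω : ℕ) (hn : 0 < n)
    (G : Type*) [Group G] [Finite G] [IsCyclic G]
    (hm : Nat.card G = ν * ω)
    (hν : ∀ p : ℕ, p.Prime → p ∣ ν → p ∣ n) (hω : Nat.Coprime n ω) :
    (∀ g : G, (∃ k > 0, g ^ n ^ k = g) ↔ orderOf g ∣ ω) ∧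
    Nat.card {g : G // ∃ k > 0, g ^ n ^ k = g} = ω := by
  have hmpos : 0 < Nat.card G := Nat.card_pos
  have hνpos : 0 < ν := by
    rcases Nat.eq_zero_or_pos ν with h | h
    · rw [h, zero_mul] at hm; omega
    · exact h
  have hωpos : 0 < ω := by
    rcases Nat.eq_zero_or_pos ω with h | h
    · rw [h, mul_zero] at hm; omega
    · exact h
  have key : ∀ g : G, (∃ k > 0, g ^ n ^ k = g) ↔ orderOf g ∣ ω := by
    intro g
    constructor
    · rintro ⟨k, hk, heq⟩
      have hnk1 : 1 ≤ n ^ k := Nat.one_le_pow _ _ hn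
      have h2 : g ^ (n ^ k - 1) * g = g := by
        rw [← pow_succ, Nat.sub_add_cancel hnk1, heq]
      have h3 : g ^ (n ^ k - 1) = 1 :=
        mul_right_cancel (h2.trans (one_mul g).symm)
      have hdvd : orderOf g ∣ n ^ k - 1 := orderOf_dvd_iff_pow_eq_one.2 h3
      have hsucc : Nat.Coprime (n ^ k) (n ^ k - 1) := by
        have h4 : Nat.gcd (1 + (n ^ k - 1)) (n ^ k - 1) = 1 := by
          rw [Nat.gcd_add_self_left]; exact Nat.gcd_one_left _
        rwa [show 1 + (n ^ k - 1) = n ^ k by omega] at h4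
      have hcopnd : Nat.Coprime n (orderOf g) :=
        Nat.Coprime.coprime_dvd_left (dvd_pow_self n hk.ne')
          (hsucc.coprime_dvd_right hdvd)
      have hcopν : Nat.Coprime (orderOf g) ν := by
        by_contra h
        obtain ⟨p, hp, hpdvd⟩ := Nat.exists_prime_and_dvd h
        have hpd : p ∣ orderOf g := hpdvd.trans (Nat.gcd_dvd_left _ _)
        have hpν : p ∣ ν := hpdvd.trans (Nat.gcd_dvd_right _ _)
        have hp1 : p ∣ 1 := (Nat.dvd_gcd (hν p hp hpν) hpd).trans hcopnd.dvd
        exact hp.ne_one (Nat.dvd_one.1 hp1)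
      have hdm : orderOf g ∣ ν * ω := hm ▸ orderOf_dvd_natCard g
      exact hcopν.dvd_of_dvd_mul_left hdm
    · intro hdω
      have hdpos : 0 < orderOf g := orderOf_pos g
      have hcop : Nat.Coprime n (orderOf g) := hω.coprime_dvd_right hdω
      refine ⟨Nat.totient (orderOf g), Nat.totient_pos.2 hdpos, ?_⟩
      have hmod : n ^ Nat.totient (orderOf g) ≡ 1 [MOD orderOf g] :=
        Nat.ModEq.pow_totient hcop
      have h1 : 1 ≤ n ^ Nat.totient (orderOf g) := Nat.one_le_pow _ _ hn
      have hdvd : orderOf g ∣ n ^ Nat.totient (orderOf g) - 1 :=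
        (Nat.modEq_iff_dvd' h1).1 hmod.symm
      have h3 : g ^ (n ^ Nat.totient (orderOf g) - 1) = 1 :=
        orderOf_dvd_iff_pow_eq_one.1 hdvd
      calc g ^ n ^ Nat.totient (orderOf g)
          = g ^ (n ^ Nat.totient (orderOf g) - 1 + 1) := by rw [Nat.sub_add_cancel h1]
        _ = g ^ (n ^ Nat.totient (orderOf g) - 1) * g := by rw [pow_succ]
        _ = g := by rw [h3, one_mul]
  refine ⟨key, ?_⟩
  obtain ⟨x, hx⟩ := IsCyclic.exists_generator (α := G)
  have hox : orderOf x = Nat.card G := by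
    rw [← Nat.card_zpowers]
    exact Nat.card_congr (Equiv.subtypeUnivEquiv hx)
  have hoy : orderOf (x ^ ν) = ω := by
    rw [orderOf_pow, hox, hm, Nat.gcd_comm, Nat.gcd_eq_left (dvd_mul_right ν ω),
      Nat.mul_div_cancel_left _ hνpos]
  have hset : ∀ g : G, orderOf g ∣ ω ↔ g ∈ Subgroup.zpowers (x ^ ν) := by
    intro g
    constructor
    · intro hgω
      obtain ⟨j, hj⟩ := Subgroup.mem_zpowers_iff.mp (hx g)
      have h1 : g ^ ω = 1 := orderOf_dvd_iff_pow_eq_one.1 hgω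
      have h2 : x ^ (j * (ω : ℤ)) = 1 := by rw [zpow_mul, hj, zpow_natCast, h1]
      have h3 : ((Nat.card G : ℤ)) ∣ j * (ω : ℤ) := by
        rw [← hox]; exact orderOf_dvd_iff_zpow_eq_one.2 h2
      rw [hm] at h3
      obtain ⟨c, hc⟩ := h3
      have hω0 : (ω : ℤ) ≠ 0 := Int.natCast_ne_zero.2 hωpos.ne'
      have hjc : j = (ν : ℤ) * c := by
        apply mul_right_cancel₀ hω0
        push_cast at hc ⊢
        linarith
      refine Subgroup.mem_zpowers_iff.mpr ⟨c, ?_⟩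
      rw [← hj, hjc, ← zpow_natCast x ν, ← zpow_mul]
    · intro hg
      obtain ⟨t, ht⟩ := Subgroup.mem_zpowers_iff.mp hg
      rw [orderOf_dvd_iff_pow_eq_one, ← ht]
      have hone : (x ^ ν) ^ ω = 1 := by rw [← hoy]; exact pow_orderOf_eq_one _
      calc ((x ^ ν) ^ t) ^ ω = ((x ^ ν) ^ (ω : ℕ)) ^ t := by
            rw [← zpow_natCast ((x ^ ν) ^ t), ← zpow_mul, mul_comm, zpow_mul, zpow_natCast]
        _ = 1 := by rw [hone, one_zpow]
  calc Nat.card {g : G // ∃ k > 0, g ^ n ^ k = g}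
      = Nat.card (Subgroup.zpowers (x ^ ν)) :=
        Nat.card_congr (Equiv.subtypeEquivRight fun g => (key g).trans (hset g))
    _ = ω := by rw [Nat.card_zpowers, hoy]
end

section
/- The Chebyshev (Dickson first-kind, parameter 1) polynomial T_n is a permutation of the finite field F_q if and only if gcd(n, q² − 1) = 1. -/
open Polynomial

/-- In any field extension of a finite field `F`, elements fixed by `x ↦ x ^ |F|` are in
the image of `F`. -/
lemma aux_mem_range_of_pow_card_eq {F K : Type*} [Field F] [Fintype F] [Field K] [Algebra F K]
    {x : K} (h : x ^ Fintype.card F = x) : ∃ a : F, algebraMap F K a = x := by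
  classical
  set q := Fintype.card F with hq'
  have hq : 1 < q := Fintype.one_lt_card
  have hPne : (X ^ q - X : K[X]) ≠ 0 := FiniteField.X_pow_card_sub_X_ne_zero K hq
  by_contra hcon
  push_neg at hcon
  set S : Finset K := Finset.univ.image (algebraMap F K) with hS
  have hxS : x ∉ S := by
    simp only [hS, Finset.mem_image, Finset.mem_univ, true_and]
    rintro ⟨a, ha⟩
    exact hcon a ha
  have hScard : S.card = q := by
    rw [hS, Finset.card_image_of_injective _ (algebraMap F K).injective, Finset.card_univ]
  have hsub : insert x S ⊆ (X ^ q - X : K[X]).roots.toFinset := by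
    intro z hz
    rw [Multiset.mem_toFinset, Polynomial.mem_roots hPne, Polynomial.IsRoot.def,
      Polynomial.eval_sub, Polynomial.eval_pow, Polynomial.eval_X, sub_eq_zero]
    rcases Finset.mem_insert.mp hz with rfl | hzS
    · exact h
    · obtain ⟨a, -, rfl⟩ := Finset.mem_image.mp hzS
      rw [← map_pow, FiniteField.pow_card]
  have hle : (insert x S).card ≤ q := by
    refine le_trans (Finset.card_le_card hsub) (le_trans (Multiset.toFinset_card_le _)
      (le_trans ((X ^ q - X : K[X]).card_roots') ?_))
    rw [FiniteField.X_pow_card_sub_X_natDegree_eq K hq]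
  rw [Finset.card_insert_of_notMem hxS, hScard] at hle
  omega

/-- Injectivity of the `n`-th power map on `m`-th roots of unity, when `gcd (n, m) = 1`. -/
lemma aux_pow_inj {K : Type*} [Field K] {m n : ℕ} (hco : Nat.Coprime n m)
    {u v : K} (hm : m ≠ 0) (hu : u ^ m = 1) (hv : v ^ m = 1) (h : u ^ n = v ^ n) : u = v := by
  have hv0 : v ≠ 0 := by
    rintro rfl
    rw [zero_pow hm] at hv
    exact zero_ne_one hv
  have hvn0 : v ^ n ≠ 0 := pow_ne_zero _ hv0
  have hγm : (u * v⁻¹) ^ m = 1 := by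
    rw [mul_pow, inv_pow, hu, hv, inv_one, mul_one]
  have hγn : (u * v⁻¹) ^ n = 1 := by
    rw [mul_pow, inv_pow, h, mul_inv_cancel₀ hvn0]
  have h1 : orderOf (u * v⁻¹) ∣ 1 := by
    have h2 := Nat.dvd_gcd (orderOf_dvd_of_pow_eq_one hγn) (orderOf_dvd_of_pow_eq_one hγm)
    rwa [Nat.Coprime.gcd_eq_one hco] at h2
  have h3 : u * v⁻¹ = 1 := orderOf_eq_one_iff.mp (Nat.dvd_one.mp h1)
  exact (mul_inv_eq_one₀ hv0).mp h3

/-- The Chebyshev polynomial `T_n` (Dickson, first kind, parameter `1`) is a permutation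
of the finite field `F_q` if and only if `gcd(n, q² − 1) = 1`. -/
theorem chebyshev_permutation_iff (n q : ℕ) (hn : 0 < n)
    (F : Type*) [Field F] [Fintype F] (hF : Fintype.card F = q) :
    Function.Bijective (fun x : F => (Polynomial.dickson 1 (1 : F) n).eval x) ↔
      Nat.Coprime n (q ^ 2 - 1) := by
  classical
  have hq2 : 1 < q := hF ▸ Fintype.one_lt_card
  have hq21 : 1 ≤ q ^ 2 := Nat.one_le_pow 2 q (by omega)
  set K := AlgebraicClosure F with hK
  set f : F →+* K := algebraMap F K with hf
  have hfinj : Function.Injective f := f.injective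
  obtain ⟨p, hpI⟩ := CharP.exists F
  haveI : CharP F p := hpI
  obtain ⟨k, hp, hqpk⟩ := FiniteField.card F p
  rw [hF] at hqpk
  haveI hpfact : Fact p.Prime := ⟨hp⟩
  haveI : CharP K p := charP_of_injective_algebraMap hfinj p
  set φ : K →+* K := iterateFrobenius K p k with hφ
  have hφdef : ∀ x : K, φ x = x ^ q := by
    intro x; rw [hφ, iterateFrobenius_def, ← hqpk]
  have hφf : ∀ a : F, φ (f a) = f a := by
    intro a; rw [hφdef, ← map_pow, ← hF, FiniteField.pow_card]
  have hkey : ∀ (m : ℕ) (x : F) (α : K), α ≠ 0 → f x = α + α⁻¹ →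
      f ((Polynomial.dickson 1 (1 : F) m).eval x) = α ^ m + α⁻¹ ^ m := by
    intro m x α hα hx
    have h1 : f ((Polynomial.dickson 1 (1 : F) m).eval x)
        = ((Polynomial.dickson 1 (1 : F) m).map f).eval (f x) := by
      rw [Polynomial.eval_map, Polynomial.eval₂_at_apply]
    rw [h1, Polynomial.map_dickson, map_one, hx]
    exact Polynomial.dickson_one_one_eval_add_inv α α⁻¹ (mul_inv_cancel₀ hα) m
  have hq2pos : q ^ 2 - 1 ≠ 0 := by
    have := Nat.one_lt_pow two_ne_zero hq2
    omega
  constructor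
  · -- bijective → coprime
    intro hbij
    by_contra hco
    obtain ⟨ℓ, hℓp, hℓd⟩ := Nat.exists_prime_and_dvd hco
    have hℓn : ℓ ∣ n := hℓd.trans (Nat.gcd_dvd_left _ _)
    have hℓq : ℓ ∣ q ^ 2 - 1 := hℓd.trans (Nat.gcd_dvd_right _ _)
    have hpℓ : ¬ p ∣ ℓ := by
      intro hdvd
      have hpe : p = ℓ := (Nat.prime_dvd_prime_iff_eq hp hℓp).mp hdvd
      subst hpe
      have h1 : p ∣ q := by rw [hqpk]; exact dvd_pow_self p k.2.ne'
      have h2 : p ∣ q ^ 2 := h1.trans (dvd_pow_self q two_ne_zero)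
      have h3 : p ∣ q ^ 2 - (q ^ 2 - 1) := Nat.dvd_sub h2 hℓq
      rw [Nat.sub_sub_self hq21] at h3
      exact hp.one_lt.ne' (Nat.dvd_one.mp h3)
    haveI : NeZero (ℓ : K) := ⟨by
      rw [Ne, CharP.cast_eq_zero_iff K p]
      exact hpℓ⟩
    obtain ⟨β, hβroot⟩ := IsAlgClosed.exists_root (Polynomial.cyclotomic ℓ K) (by
      rw [Polynomial.degree_cyclotomic]
      simp only [Ne, Nat.cast_eq_zero]
      exact (Nat.totient_pos.mpr hℓp.pos).ne')
    have hβprim : IsPrimitiveRoot β ℓ := Polynomial.isRoot_cyclotomic_iff.mp hβroot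
    have hβℓ : β ^ ℓ = 1 := hβprim.pow_eq_one
    have hβ0 : β ≠ 0 := by
      rintro rfl
      rw [zero_pow hℓp.pos.ne'] at hβℓ
      exact zero_ne_one hβℓ
    have hβ1 : β ≠ 1 := hβprim.ne_one hℓp.one_lt
    have hβdvd : ∀ m : ℕ, ℓ ∣ m → β ^ m = 1 := by
      rintro m ⟨c, rfl⟩
      rw [pow_mul, hβℓ, one_pow]
    have hβinv : β * β⁻¹ = 1 := mul_inv_cancel₀ hβ0
    have hcases : β ^ q = β ∨ β ^ q = β⁻¹ := by
      have hfactor : ℓ ∣ (q - 1) * (q + 1) := by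
        have he : q ^ 2 - 1 = (q - 1) * (q + 1) := by
          obtain ⟨m, rfl⟩ : ∃ m, q = m + 1 := ⟨q - 1, by omega⟩
          simp only [Nat.add_sub_cancel]
          have h1 : (m + 1) ^ 2 = m ^ 2 + 2 * m + 1 := by ring
          have h2 : m * (m + 1 + 1) = m ^ 2 + 2 * m := by ring
          omega
        rw [← he]; exact hℓq
      rcases (Nat.Prime.dvd_mul hℓp).mp hfactor with h | h
      · left
        have h1 : β ^ (q - 1) = 1 := hβdvd _ h
        calc β ^ q = β ^ (q - 1) * β := by
              rw [← pow_succ]; congr 1; omega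
          _ = β := by rw [h1, one_mul]
      · right
        have h1 : β ^ (q + 1) = 1 := hβdvd _ h
        have h2 : β ^ q * β = 1 := by rw [← pow_succ]; exact h1
        exact eq_inv_of_mul_eq_one_left h2
    have hfix : (β + β⁻¹) ^ q = β + β⁻¹ := by
      have hmap : φ (β + β⁻¹) = β + β⁻¹ := by
        rw [map_add, hφdef β, hφdef β⁻¹]
        rcases hcases with h | h
        · rw [inv_pow, h]
        · rw [inv_pow, h, inv_inv, add_comm]
      rw [hφdef] at hmap
      exact hmap
    obtain ⟨a, ha⟩ := aux_mem_range_of_pow_card_eq (hF ▸ hfix)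
    have hevala : f ((Polynomial.dickson 1 (1 : F) n).eval a) = 2 := by
      rw [hkey n a β hβ0 ha, hβdvd n hℓn, inv_pow, hβdvd n hℓn, inv_one]
      norm_num
    have heval2 : f ((Polynomial.dickson 1 (1 : F) n).eval 2) = 2 := by
      have h2 : f (2 : F) = (1 : K) + (1 : K)⁻¹ := by
        rw [inv_one, map_ofNat]; norm_num
      rw [hkey n 2 1 one_ne_zero h2, one_pow, inv_one, one_pow]
      norm_num
    have heq : (Polynomial.dickson 1 (1 : F) n).eval a
        = (Polynomial.dickson 1 (1 : F) n).eval 2 := by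
      apply hfinj; rw [hevala, heval2]
    have ha2 : a = 2 := hbij.1 heq
    have hsum2 : β + β⁻¹ = 2 := by
      rw [← ha, ha2, map_ofNat]
    have h6 : β * (β + β⁻¹) = β * 2 := by rw [hsum2]
    have hβeq : (β - 1) ^ 2 = 0 := by linear_combination h6 - hβinv
    exact hβ1 (sub_eq_zero.mp (pow_eq_zero_iff two_ne_zero |>.mp hβeq))
  · -- coprime → bijective
    intro hco
    rw [Fintype.bijective_iff_injective_and_card]
    refine ⟨?_, rfl⟩
    intro x y hxy
    simp only at hxy
    have hdecomp : ∀ z : F, ∃ α : K, α ≠ 0 ∧ f z = α + α⁻¹ ∧ α ^ (q ^ 2) = α := by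
      intro z
      obtain ⟨α, hαroot⟩ := IsAlgClosed.exists_root
        (C 1 * X ^ 2 + C (-(f z)) * X + C 1 : K[X]) (by
          rw [Polynomial.degree_quadratic one_ne_zero]
          decide)
      have hroot : α ^ 2 - f z * α + 1 = 0 := by
        simp only [Polynomial.IsRoot.def, Polynomial.eval_add, Polynomial.eval_mul,
          Polynomial.eval_pow, Polynomial.eval_C, Polynomial.eval_X, one_mul] at hαroot
        linear_combination hαroot
      have hα0 : α ≠ 0 := by
        rintro rfl
        simp at hroot
      have hαinv : α * (f z - α) = 1 := by linear_combination -hroot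
      have hinv : α⁻¹ = f z - α := ((eq_inv_of_mul_eq_one_right hαinv)).symm
      have hsum : f z = α + α⁻¹ := by rw [hinv]; ring
      have hαα : α * α⁻¹ = 1 := mul_inv_cancel₀ hα0
      have hφα : (α ^ q) ^ 2 - f z * α ^ q + 1 = 0 := by
        have h7 := congrArg φ hroot
        simp only [map_add, map_sub, map_mul, map_pow, map_one, map_zero] at h7
        rw [hφf z] at h7
        rw [← hφdef α]
        linear_combination h7
      have hfact : (α ^ q - α) * (α ^ q - α⁻¹) = 0 := by
        have h8 : (α ^ q - α) * (α ^ q - α⁻¹) = (α ^ q) ^ 2 - f z * α ^ q + 1 := by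
          rw [hsum]; linear_combination hαα
        rw [h8, hφα]
      have hq2fix : α ^ (q ^ 2) = α := by
        rcases mul_eq_zero.mp hfact with h | h
        · have hαq : α ^ q = α := by linear_combination h
          rw [pow_two, pow_mul, hαq, hαq]
        · have hαq : α ^ q = α⁻¹ := by linear_combination h
          rw [pow_two, pow_mul, hαq, inv_pow, hαq, inv_inv]
      exact ⟨α, hα0, hsum, hq2fix⟩
    obtain ⟨α, hα0, hxα, hαq⟩ := hdecomp x
    obtain ⟨β, hβ0, hyβ, hβq⟩ := hdecomp y
    have hsucc : q ^ 2 - 1 + 1 = q ^ 2 := by omega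
    have hαu : α ^ (q ^ 2 - 1) = 1 := by
      have h1 : α ^ (q ^ 2 - 1) * α = 1 * α := by
        rw [← pow_succ, hsucc, hαq, one_mul]
      exact mul_right_cancel₀ hα0 h1
    have hβu : β ^ (q ^ 2 - 1) = 1 := by
      have h1 : β ^ (q ^ 2 - 1) * β = 1 * β := by
        rw [← pow_succ, hsucc, hβq, one_mul]
      exact mul_right_cancel₀ hβ0 h1
    have hev : α ^ n + α⁻¹ ^ n = β ^ n + β⁻¹ ^ n := by
      rw [← hkey n x α hα0 hxα, ← hkey n y β hβ0 hyβ, hxy]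
    have hαn0 : α ^ n ≠ 0 := pow_ne_zero _ hα0
    have hβn0 : β ^ n ≠ 0 := pow_ne_zero _ hβ0
    have h3 : α ^ n * (α ^ n)⁻¹ = 1 := mul_inv_cancel₀ hαn0
    have h4 : β ^ n * (β ^ n)⁻¹ = 1 := mul_inv_cancel₀ hβn0
    rw [inv_pow, inv_pow] at hev
    have h5 : (α ^ n + (α ^ n)⁻¹) * (α ^ n * β ^ n)
        = (β ^ n + (β ^ n)⁻¹) * (α ^ n * β ^ n) := by rw [hev]
    have hsplit : (α ^ n - β ^ n) * (α ^ n * β ^ n - 1) = 0 := by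
      linear_combination h5 - β ^ n * h3 + α ^ n * h4
    rcases mul_eq_zero.mp hsplit with h | h
    · have hab : α = β := aux_pow_inj hco hq2pos hαu hβu (sub_eq_zero.mp h)
      apply hfinj
      rw [hxα, hyβ, hab]
    · have h' : α ^ n = β⁻¹ ^ n := by
        rw [sub_eq_zero] at h
        rw [inv_pow]
        exact eq_inv_of_mul_eq_one_left h
      have hbu : β⁻¹ ^ (q ^ 2 - 1) = 1 := by rw [inv_pow, hβu, inv_one]
      have hab : α = β⁻¹ := aux_pow_inj hco hq2pos hαu hbu h'
      apply hfinj
      rw [hxα, hyβ, hab, inv_inv, add_comm]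
end

section
/- Let q be a prime power and n a positive integer with gcd(n, q² − 1) = 1, and write q − 1 = ω₀, q + 1 = ω₁ (so ν₀ = ν₁ = 1). Then the permutation T_n of F_q is an involution (T_n ∘ T_n = id on F_q) if and only if n² ≡ ±1 (mod d) for every divisor d of ω₀ and every divisor d of ω₁; equivalently, T_{n²} acts as the identity on F_q. -/
open Polynomial

private lemma aux_add_inv_eq_s18 {K : Type*} [Field K] {a b : K} (ha : a ≠ 0) (hb : b ≠ 0)
    (h : a + a⁻¹ = b + b⁻¹) : a = b ∨ a * b = 1 := by
  have ha' := mul_inv_cancel₀ ha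
  have hb' := mul_inv_cancel₀ hb
  have h2 : (a - b) * (a * b - 1) = 0 := by
    linear_combination (a * b) * h - b * ha' + a * hb'
  rcases mul_eq_zero.mp h2 with h3 | h3
  · exact Or.inl (sub_eq_zero.mp h3)
  · exact Or.inr (sub_eq_zero.mp h3)

private lemma aux_setOf_pow_card {q : ℕ} (K : Type*) [Field K] (hq : 1 < q) :
    ({z : K | z ^ q = z}).Finite ∧ ({z : K | z ^ q = z}).ncard ≤ q := by
  classical
  have hdeg : (X ^ q - X : K[X]).degree = (q : ℕ) := by
    rw [degree_sub_eq_left_of_degree_lt, degree_X_pow]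
    rw [degree_X, degree_X_pow]
    exact_mod_cast hq
  have hPne : (X ^ q - X : K[X]) ≠ 0 := by
    intro h0
    rw [h0, degree_zero] at hdeg
    exact absurd hdeg (by simp)
  have hsub : {z : K | z ^ q = z} ⊆ ((X ^ q - X : K[X]).roots.toFinset : Set K) := by
    intro z hz
    simp only [Set.mem_setOf_eq] at hz
    simp only [Finset.coe_sort_coe, Multiset.mem_toFinset, Finset.mem_coe, mem_roots hPne,
      IsRoot, eval_sub, eval_pow, eval_X]
    rw [hz, sub_self]
  refine ⟨Set.Finite.subset (Multiset.toFinset _).finite_toSet hsub, ?_⟩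
  calc ({z : K | z ^ q = z}).ncard ≤ ((X ^ q - X : K[X]).roots.toFinset : Set K).ncard :=
        Set.ncard_le_ncard hsub (Multiset.toFinset _).finite_toSet
    _ = (X ^ q - X : K[X]).roots.toFinset.card := Set.ncard_coe_finset _
    _ ≤ Multiset.card (X ^ q - X : K[X]).roots := Multiset.toFinset_card_le _
    _ ≤ (X ^ q - X : K[X]).natDegree := card_roots' _
    _ = q := natDegree_eq_of_degree_eq_some hdeg

set_option maxHeartbeats 1000000 in
/-- Let `F = F_q` and `gcd(n, q² - 1) = 1`, so that the Chebyshev polynomial `T_n`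
permutes `F_q` (here `ω₀ = q - 1`, `ω₁ = q + 1`).  Then `T_n` is an involution of `F_q`
(`T_n ∘ T_n = id`) if and only if `n² ≡ ±1 (mod d)` for every divisor `d` of `q - 1`
and every divisor `d` of `q + 1`. -/
theorem chebyshev_involution_iff (n q : ℕ) (hn : 0 < n)
    (F : Type*) [Field F] [Fintype F] (hF : Fintype.card F = q)
    (hcop : Nat.Coprime n (q ^ 2 - 1)) :
    (∀ x : F, (Polynomial.dickson 1 (1 : F) n).eval
        ((Polynomial.dickson 1 (1 : F) n).eval x) = x) ↔
      (∀ d : ℕ, (d ∣ q - 1 ∨ d ∣ q + 1) →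
        ((n ^ 2 : ZMod d) = 1 ∨ (n ^ 2 : ZMod d) = -1)) := by
  classical
  have hq : 1 < q := hF ▸ Fintype.one_lt_card
  obtain ⟨p, pc⟩ := CharP.exists F
  haveI : CharP F p := pc
  obtain ⟨e, hp, hcard⟩ := FiniteField.card F p
  haveI : Fact p.Prime := ⟨hp⟩
  have hqpe : q = p ^ (e : ℕ) := hF ▸ hcard
  set K := AlgebraicClosure F with hK
  haveI : CharP K p := charP_of_injective_algebraMap (algebraMap F K).injective p
  set i := algebraMap F K with hi_def
  have hi : Function.Injective i := (algebraMap F K).injective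
  -- Frobenius
  have hfrob : ∀ x y : K, (x + y) ^ q = x ^ q + y ^ q := by
    intro x y; rw [hqpe]; exact add_pow_char_pow x y p (e : ℕ)
  -- the image of F in K is exactly the fixed set of the q-power map
  have hrangesub : Set.range i ⊆ {z : K | z ^ q = z} := by
    rintro _ ⟨x, rfl⟩
    have : x ^ q = x := by rw [← hF]; exact FiniteField.pow_card x
    simp only [Set.mem_setOf_eq, ← map_pow, this]
  have hrange : Set.range i = {z : K | z ^ q = z} := by
    obtain ⟨hfin, hle⟩ := aux_setOf_pow_card K hq (q := q)
    refine Set.eq_of_subset_of_ncard_le hrangesub ?_ hfin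
    have hr : (Set.range i).ncard = q := by
      rw [← Set.image_univ, Set.ncard_image_of_injective _ hi, Set.ncard_univ,
        Nat.card_eq_fintype_card, hF]
    omega
  -- rewrite the involution condition via `T_{n²}`
  have hcomp : ∀ x : F, (dickson 1 (1 : F) n).eval ((dickson 1 (1 : F) n).eval x)
      = (dickson 1 (1 : F) (n ^ 2)).eval x := by
    intro x
    rw [pow_two, dickson_one_one_mul, eval_comp]
  have hevalK : ∀ x : F, i ((dickson 1 (1 : F) (n ^ 2)).eval x)
      = (dickson 1 (1 : K) (n ^ 2)).eval (i x) := by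
    intro x
    rw [← eval₂_at_apply, eval₂_eq_eval_map, map_dickson, map_one]
  -- evaluation of `T_{n²}` at `α + α⁻¹`
  have hdick : ∀ (α : K), α ≠ 0 →
      (dickson 1 (1 : K) (n ^ 2)).eval (α + α⁻¹) = α ^ (n ^ 2) + (α ^ (n ^ 2))⁻¹ := by
    intro α hα
    rw [dickson_one_one_eval_add_inv _ _ (mul_inv_cancel₀ hα), inv_pow]
  constructor
  · -- forward direction
    intro h
    have h' : ∀ x : F, (dickson 1 (1 : F) (n ^ 2)).eval x = x := by
      intro x; rw [← hcomp]; exact h x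
    -- key step: from a fixed point `α + α⁻¹` deduce congruence mod `orderOf α`
    have main : ∀ (α : K) (x : F), α ≠ 0 → i x = α + α⁻¹ →
        (n ^ 2 ≡ 1 [MOD orderOf α] ∨ orderOf α ∣ n ^ 2 + 1) := by
      intro α x hα hx
      have h1 : α ^ (n ^ 2) + (α ^ (n ^ 2))⁻¹ = α + α⁻¹ := by
        rw [← hdick α hα, ← hx, ← hevalK, h' x, hx]
      rcases aux_add_inv_eq_s18 (pow_ne_zero _ hα) hα h1 with h2 | h2
      · left
        set u : Kˣ := Units.mk0 α hα with hu
        have hord : orderOf α = orderOf u := by rw [← orderOf_units (y := u), hu, Units.val_mk0]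
        have h3 : u ^ (n ^ 2) = u ^ 1 := by
          ext
          rw [Units.val_pow_eq_pow_val, Units.val_pow_eq_pow_val, pow_one, hu, Units.val_mk0, h2]
        rw [hord]
        exact pow_eq_pow_iff_modEq.mp h3
      · right
        have : α ^ (n ^ 2 + 1) = 1 := by rw [pow_succ, h2]
        exact orderOf_dvd_of_pow_eq_one this
    -- elements of order q - 1 and q + 1
    have key : ∀ m : ℕ, (m = q - 1 ∨ m = q + 1) →
        (n ^ 2 ≡ 1 [MOD m] ∨ m ∣ n ^ 2 + 1) := by
      rintro m (rfl | rfl)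
      · -- order q - 1 : image of a generator of Fˣ
        obtain ⟨g, hg⟩ := IsCyclic.exists_generator (α := Fˣ)
        have hog : orderOf g = q - 1 := by
          rw [orderOf_eq_card_of_forall_mem_zpowers hg, Nat.card_eq_fintype_card, ← hF,
            ← Fintype.card_units]
        have hog' : orderOf ((g : F)) = q - 1 := by rw [orderOf_units, hog]
        have hα : orderOf (i (g : F)) = q - 1 := by
          have := orderOf_injective i.toMonoidHom hi ((g : F))
          rw [← hog']
          exact this
        have hgne : i (g : F) ≠ 0 := by
          intro h0
          exact Units.ne_zero g (hi (by rw [h0, map_zero]))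
        have hx : i ((g : F) + (g : F)⁻¹) = i (g : F) + (i (g : F))⁻¹ := by
          rw [map_add, map_inv₀]
        have := main (i (g : F)) ((g : F) + (g : F)⁻¹) hgne hx
        rwa [hα] at this
      · -- order q + 1 : a primitive (q+1)-st root of unity in K
        haveI : NeZero ((q + 1 : ℕ) : K) := by
          constructor
          rw [Ne, CharP.cast_eq_zero_iff K p]
          intro hdvd
          have hpq : p ∣ q := by
            rw [hqpe]; exact dvd_pow_self p (by positivity)
          have h1 : p ∣ 1 := by
            have := Nat.dvd_sub hdvd hpq
            simpa using this
          exact hp.ne_one (Nat.dvd_one.mp h1)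
        obtain ⟨ζ, hζ⟩ := HasEnoughRootsOfUnity.exists_primitiveRoot K (q + 1)
        have hζne : ζ ≠ 0 := hζ.ne_zero (Nat.succ_ne_zero q)
        have hord : orderOf ζ = q + 1 := hζ.eq_orderOf.symm
        have hζq : ζ ^ q = ζ⁻¹ := by
          have h1 : ζ ^ q * ζ = 1 := by rw [← pow_succ, hζ.pow_eq_one]
          exact eq_inv_of_mul_eq_one_left h1
        -- ζ + ζ⁻¹ is fixed by the q-power map, hence lies in the image of F
        have hmem : ζ + ζ⁻¹ ∈ Set.range i := by
          rw [hrange]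
          simp only [Set.mem_setOf_eq]
          rw [hfrob, hζq, inv_pow, hζq, inv_inv, add_comm]
        obtain ⟨x, hx⟩ := hmem
        have := main ζ x hζne hx
        rwa [hord] at this
    -- conclude for arbitrary divisors
    intro d hd
    have hdpos : 0 < d := by
      rcases hd with hd | hd
      · exact Nat.pos_of_dvd_of_pos hd (by omega)
      · exact Nat.pos_of_dvd_of_pos hd (by omega)
    haveI : NeZero d := ⟨hdpos.ne'⟩
    have hkm : n ^ 2 ≡ 1 [MOD d] ∨ d ∣ n ^ 2 + 1 := by
      rcases hd with hd | hd
      · rcases key (q - 1) (Or.inl rfl) with h1 | h1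
        · exact Or.inl (h1.of_dvd hd)
        · exact Or.inr (dvd_trans hd h1)
      · rcases key (q + 1) (Or.inr rfl) with h1 | h1
        · exact Or.inl (h1.of_dvd hd)
        · exact Or.inr (dvd_trans hd h1)
    rcases hkm with h1 | h1
    · left
      have := (ZMod.natCast_eq_natCast_iff _ _ _).mpr h1
      push_cast at this
      exact this
    · right
      have h2 : ((n ^ 2 + 1 : ℕ) : ZMod d) = 0 := (ZMod.natCast_eq_zero_iff _ _).mpr h1
      push_cast at h2
      linear_combination h2
  · -- backward direction
    intro H x
    rw [hcomp]
    -- find α in the algebraic closure with α + α⁻¹ = i x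
    obtain ⟨α, hroot⟩ := IsAlgClosed.exists_root
      (C 1 * X ^ 2 + C (-(i x)) * X + C 1) (by rw [degree_quadratic one_ne_zero]; decide)
    have hroot' : α ^ 2 - i x * α + 1 = 0 := by
      have := hroot
      simp only [IsRoot, eval_add, eval_mul, eval_C, eval_pow, eval_X, one_mul] at this
      linear_combination this
    have hα : α ≠ 0 := by
      intro h0
      rw [h0] at hroot'
      simp at hroot'
    have hx : i x = α + α⁻¹ := by
      have h1 : α * (α + α⁻¹) = α * (i x) := by
        rw [mul_add, mul_inv_cancel₀ hα, ← sq]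
        linear_combination hroot'
      exact (mul_left_cancel₀ hα h1).symm
    -- α has order dividing q - 1 or q + 1
    have hfix : (α + α⁻¹) ^ q = α + α⁻¹ := by
      rw [← hx, ← map_pow]
      congr 1
      rw [← hF]
      exact FiniteField.pow_card x
    have hq1 : α ^ q + (α ^ q)⁻¹ = α + α⁻¹ := by
      rw [← inv_pow, ← hfrob, hfix]
    have hdvd : orderOf α ∣ q - 1 ∨ orderOf α ∣ q + 1 := by
      rcases aux_add_inv_eq_s18 (pow_ne_zero _ hα) hα hq1 with h2 | h2
      · left
        apply orderOf_dvd_of_pow_eq_one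
        have h3 : α ^ (q - 1) * α = α ^ q := by
          rw [← pow_succ]
          congr 1
          omega
        have h4 : α ^ (q - 1) * α = 1 * α := by rw [h3, h2, one_mul]
        exact mul_right_cancel₀ hα h4
      · right
        apply orderOf_dvd_of_pow_eq_one
        rw [pow_succ, h2]
    set d := orderOf α with hd_def
    have hdpos : 0 < d := by
      rcases hdvd with h2 | h2
      · exact Nat.pos_of_dvd_of_pos h2 (by omega)
      · exact Nat.pos_of_dvd_of_pos h2 (by omega)
    haveI : NeZero d := ⟨hdpos.ne'⟩
    set u : Kˣ := Units.mk0 α hα with hu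
    have hord : orderOf u = d := by rw [hd_def, ← orderOf_units (y := u), hu, Units.val_mk0]
    have hpow : α ^ (n ^ 2) = α ∨ α ^ (n ^ 2) = α⁻¹ := by
      rcases H d hdvd with h2 | h2
      · left
        have h3 : ((n ^ 2 : ℕ) : ZMod d) = ((1 : ℕ) : ZMod d) := by push_cast; rw [h2]
        have h4 : n ^ 2 ≡ 1 [MOD d] := (ZMod.natCast_eq_natCast_iff _ _ _).mp h3
        have h5 : u ^ (n ^ 2) = u ^ 1 := pow_eq_pow_iff_modEq.mpr (hord ▸ h4)
        have h6 := congrArg (Units.val) h5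
        rw [Units.val_pow_eq_pow_val, Units.val_pow_eq_pow_val, pow_one, hu, Units.val_mk0] at h6
        exact h6
      · right
        have h3 : ((n ^ 2 + 1 : ℕ) : ZMod d) = 0 := by push_cast; rw [h2]; ring
        have h4 : d ∣ n ^ 2 + 1 := (ZMod.natCast_eq_zero_iff _ _).mp h3
        have h5 : α ^ (n ^ 2 + 1) = 1 := by
          rw [hd_def] at h4
          exact orderOf_dvd_iff_pow_eq_one.mp h4
        rw [pow_succ] at h5
        exact eq_inv_of_mul_eq_one_left h5
    apply hi
    rw [hevalK, hx, hdick α hα]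
    rcases hpow with h2 | h2
    · rw [h2]
    · rw [h2, inv_inv, add_comm]
end

section
/- Let n be a positive integer, q a prime power, and let q − 1 = ν₀ω₀ and q + 1 = ν₁ω₁ be the n-decompositions (rad(νᵢ) | rad(n), gcd(ωᵢ, n) = 1). Then the number of T_n-periodic points in F_q equals (ω₀ + ω₁)/2. -/
/-!
Work in an algebraic closure `K` of `F`. Every `a ∈ F` is `α + α⁻¹` for some `α ∈ Kˣ`, and since
Frobenius fixes `a`, it sends `α` to `α` or `α⁻¹`; so `α ^ (q - 1) = 1` or `α ^ (q + 1) = 1`, and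
conversely every such `α` gives a point of `F`. As `T_n (α + α⁻¹) = α ^ n + α⁻¹ ^ n`, the point `a`
is periodic iff `α ^ n ^ k = α ^ (± 1)` for some `k > 0`, i.e. iff the order of `α` is prime to `n`;
for `α ^ (q ∓ 1) = 1` this says `α ^ ω₀ = 1`, resp. `α ^ ω₁ = 1`. Hence the periodic points are the
image of `U = μ_ω₀ ∪ μ_ω₁` under `α ↦ α + α⁻¹`, which is exactly 2-to-1 away from the points
`α = α⁻¹`, and these lie in `U` exactly when they lie in `μ_ω₀ ∩ μ_ω₁`. Therefore twice the number
of periodic points is `#U + #(μ_ω₀ ∩ μ_ω₁) = ω₀ + ω₁`.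
-/

open Polynomial Function

structure IsNDecomposition (n m ν ω : ℕ) : Prop where
  eq_mul : m = ν * ω
  prime_dvd : ∀ p : ℕ, p.Prime → p ∣ ν → p ∣ n
  coprime : ω.Coprime n

namespace IsNDecomposition

variable {n ν₀ ω₀ ν₁ ω₁ : ℕ}

theorem pow_eq_one_iff {m ν ω : ℕ} (h : IsNDecomposition n m ν ω) {G : Type*} [Monoid G]
    {α : G} : α ^ ω = 1 ↔ α ^ m = 1 ∧ (orderOf α).Coprime n := by
  simp only [← orderOf_dvd_iff_pow_eq_one, h.eq_mul]
  refine ⟨fun hω => ⟨hω.mul_left ν, h.coprime.coprime_dvd_left hω⟩, fun ⟨hm, hn⟩ => ?_⟩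
  have hν : (orderOf α).Coprime ν := Nat.coprime_of_dvd fun p hp hpα hpν =>
    hp.ne_one <| (Nat.coprime_self p).1 <|
      (hn.coprime_dvd_left hpα).coprime_dvd_right (h.prime_dvd p hp hpν)
  exact hν.dvd_of_dvd_mul_left hm

theorem sep_inv_eq_self_eq_inter {q : ℕ} (hq : 0 < q) (h₀ : IsNDecomposition n (q - 1) ν₀ ω₀)
    (h₁ : IsNDecomposition n (q + 1) ν₁ ω₁) (G : Type*) [Group G] :
    {α ∈ {α : G | α ^ ω₀ = 1} ∪ {α | α ^ ω₁ = 1} | α⁻¹ = α} =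
      {α : G | α ^ ω₀ = 1} ∩ {α | α ^ ω₁ = 1} := by
  ext α
  have hpow : α ^ (q + 1) = α ^ (q - 1) * α ^ 2 := by
    rw [← pow_add, show q - 1 + 2 = q + 1 by omega]
  simp only [Set.mem_ofPred_eq, Set.mem_union, Set.mem_inter_iff, h₀.pow_eq_one_iff,
    h₁.pow_eq_one_iff, inv_eq_iff_mul_eq_one, ← sq, hpow]
  constructor
  · rintro ⟨hα, hsq⟩
    simp only [hsq, mul_one] at hα ⊢
    tauto
  · rintro ⟨⟨hα, hco⟩, hα', -⟩
    rw [hα, one_mul] at hα'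
    exact ⟨Or.inl ⟨hα, hco⟩, hα'⟩

end IsNDecomposition

theorem exists_pow_pow_eq_self_or_inv_iff_coprime {G : Type*} [Group G] (α : G) (n : ℕ) :
    (∃ k > 0, α ^ n ^ k = α ∨ α ^ n ^ k = α⁻¹) ↔ (orderOf α).Coprime n := by
  constructor
  · rintro ⟨k, hk, hα⟩
    -- applying `α ↦ α ^ n ^ k` twice removes the inverse
    have hsq : α ^ n ^ (2 * k) = α ^ 1 := by
      rw [two_mul, pow_add, pow_mul]
      rcases hα with hα | hα <;> simp [hα]
    have hgcd := (Nat.ModEq.gcd_eq (pow_eq_pow_iff_modEq.1 hsq)).trans (Nat.gcd_one_left _)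
    exact ((Nat.coprime_pow_left_iff (by omega) _ _).1 hgcd).symm
  · intro hco
    obtain hd | hd := (orderOf α).eq_zero_or_pos
    · obtain rfl : n = 1 := by simpa [hd] using hco
      exact ⟨1, one_pos, by simp⟩
    refine ⟨(orderOf α).totient, Nat.totient_pos.2 hd, Or.inl ?_⟩
    simpa using pow_eq_pow_iff_modEq.2 (Nat.ModEq.pow_totient hco.symm)

theorem Function.Semiconj.image_periodicPts {α β : Type*} {fa : α → α} {fb : β → β} {g : α → β}
    (h : Semiconj g fa fb) (hg : Injective g) :
    g '' periodicPts fa = Set.range g ∩ periodicPts fb := by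
  ext y
  constructor
  · rintro ⟨x, hx, rfl⟩
    exact ⟨Set.mem_range_self x, h.mapsTo_periodicPts hx⟩
  · rintro ⟨⟨x, rfl⟩, k, hk, hx⟩
    refine ⟨x, ⟨k, hk, hg ?_⟩, rfl⟩
    rwa [(h.iterate_right k).eq]

theorem Set.two_mul_ncard_image_eq_ncard_add_ncard_inv_eq_self {G β : Type*} [InvolutiveInv G]
    {f : G → β} (hf : ∀ x y, f y = f x ↔ y = x ∨ y = x⁻¹) {U : Set G} (hU : U.Finite)
    (hinv : ∀ x ∈ U, x⁻¹ ∈ U) :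
    2 * (f '' U).ncard = U.ncard + {x ∈ U | x⁻¹ = x}.ncard := by
  classical
  obtain ⟨s, rfl⟩ := hU.exists_finset_coe
  have hfixed : {x ∈ (s : Set G) | x⁻¹ = x} = ↑(s.filter fun x => x⁻¹ = x) := by
    ext; simp
  rw [hfixed, ← Finset.coe_image, ncard_coe_finset, ncard_coe_finset, ncard_coe_finset,
    Finset.card_eq_sum_card_fiberwise (fun x hx => Finset.mem_image_of_mem f hx),
    Finset.card_eq_sum_card_fiberwise (t := s.image f) (f := f)
      (fun x hx => Finset.mem_image_of_mem f (Finset.mem_filter.1 hx).1),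
    ← Finset.sum_add_distrib, mul_comm, ← smul_eq_mul, ← Finset.sum_const]
  refine Finset.sum_congr rfl fun b hb => ?_
  obtain ⟨x, hx, rfl⟩ := Finset.mem_image.1 hb
  have hfiber : s.filter (fun y => f y = f x) = {x, x⁻¹} := by
    ext y
    simp only [Finset.mem_filter, hf, Finset.mem_insert, Finset.mem_singleton]
    refine ⟨And.right, fun hy => ⟨?_, hy⟩⟩
    rcases hy with rfl | rfl
    exacts [hx, hinv _ hx]
  rw [Finset.filter_comm, hfiber]
  by_cases hx' : x⁻¹ = x
  · simp [hx', Finset.filter_singleton]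
  · simp [Finset.card_pair (Ne.symm hx'), hx', Ne.symm hx']

section joukowski

variable {R : Type*} [CommRing R]

def joukowski (α : Rˣ) : R := α + ↑α⁻¹

theorem joukowski_inv (α : Rˣ) : joukowski α⁻¹ = joukowski α := by
  simp [joukowski, add_comm]

theorem dickson_eval_joukowski (n : ℕ) (α : Rˣ) :
    (dickson 1 (1 : R) n).eval (joukowski α) = joukowski (α ^ n) := by
  simp [joukowski, dickson_one_one_eval_add_inv _ _ α.mul_inv]

theorem dickson_iterate_joukowski (n k : ℕ) (α : Rˣ) :
    (fun x => (dickson 1 (1 : R) n).eval x)^[k] (joukowski α) = joukowski (α ^ n ^ k) := by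
  induction k with
  | zero => simp
  | succ k ih => rw [iterate_succ_apply', ih, dickson_eval_joukowski, pow_succ, pow_mul]

variable [IsDomain R]

theorem joukowski_eq_joukowski_iff {α β : Rˣ} :
    joukowski β = joukowski α ↔ β = α ∨ β = α⁻¹ := by
  have key : (β - α : R) * (β - ↑α⁻¹) = β * (joukowski β - joukowski α) := by
    simp only [joukowski]
    linear_combination α.mul_inv - β.mul_inv
  rw [← sub_eq_zero, ← β.isUnit.mul_right_eq_zero, ← key, mul_eq_zero, sub_eq_zero,
    sub_eq_zero, Units.val_inj, Units.val_inj]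

theorem joukowski_mem_periodicPts_iff (n : ℕ) (α : Rˣ) :
    joukowski α ∈ periodicPts (fun x => (dickson 1 (1 : R) n).eval x) ↔
      (orderOf α).Coprime n := by
  simp only [mem_periodicPts, IsPeriodicPt, IsFixedPt, dickson_iterate_joukowski,
    joukowski_eq_joukowski_iff, exists_pow_pow_eq_self_or_inv_iff_coprime]

end joukowski

namespace IsAlgClosed

variable {K : Type*} [Field K] [IsAlgClosed K]

theorem exists_joukowski_eq (x : K) : ∃ α : Kˣ, joukowski α = x := by
  obtain ⟨y, hy⟩ := exists_root (X ^ 2 - C x * X + 1 : K[X])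
    (by rw [show (X ^ 2 - C x * X + 1 : K[X]).degree = 2 by compute_degree!]; decide)
  have hy : y ^ 2 - x * y + 1 = 0 := by simpa using hy
  have hy0 : y ≠ 0 := by rintro rfl; simp at hy
  refine ⟨Units.mk0 y hy0, ?_⟩
  simp only [joukowski, Units.val_inv_eq_inv_val, Units.val_mk0]
  field_simp
  linear_combination hy

theorem ncard_setOf_pow_eq_one {m : ℕ} (hm : (m : K) ≠ 0) :
    {α : Kˣ | α ^ m = 1}.ncard = m := by
  have : NeZero (m : K) := ⟨hm⟩
  have : NeZero m := .of_neZero_natCast K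
  rw [← Nat.card_coe_set_eq]
  exact HasEnoughRootsOfUnity.natCard_rootsOfUnity K m

end IsAlgClosed

namespace FiniteField

variable {F K : Type*} [Field F] [Fintype F] [Field K]

theorem natCast_ne_zero_of_dvd_card_sub_one {m : ℕ} (hm : m ∣ Fintype.card F - 1) :
    (m : F) ≠ 0 := by
  obtain ⟨c, hc⟩ := hm
  intro h
  have := congrArg (Nat.cast : ℕ → F) hc
  rw [Nat.cast_sub Fintype.card_pos, cast_card_eq_zero] at this
  simp [h] at this

theorem natCast_ne_zero_of_dvd_card_add_one {m : ℕ} (hm : m ∣ Fintype.card F + 1) :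
    (m : F) ≠ 0 := by
  obtain ⟨c, hc⟩ := hm
  intro h
  have := congrArg (Nat.cast : ℕ → F) hc
  simp [h] at this

theorem mem_range_of_pow_card_eq_self (i : F →+* K) {x : K} (hx : x ^ Fintype.card F = x) :
    x ∈ Set.range i := by
  have hne := X_pow_card_sub_X_ne_zero F (Fintype.one_lt_card (α := F))
  have hsplit : Splits (X ^ Fintype.card F - X : F[X]) := by
    rw [splits_iff_card_roots, roots_X_pow_card_sub_X, X_pow_card_sub_X_natDegree_eq F
      Fintype.one_lt_card, ← Finset.card_def, Finset.card_univ]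
  exact hsplit.mem_range_of_isRoot hne (i := i) (by simp [hx])

variable [Algebra F K]

theorem frobeniusAlgHom_joukowski (α : Kˣ) :
    frobeniusAlgHom F K (joukowski α) = joukowski (α ^ Fintype.card F) := by
  simp [joukowski, map_add]

theorem range_algebraMap_eq_image_joukowski [IsAlgClosed K] :
    Set.range (algebraMap F K) =
      joukowski '' {α : Kˣ | α ^ (Fintype.card F - 1) = 1 ∨ α ^ (Fintype.card F + 1) = 1} := by
  have hW (α : Kˣ) : α ^ (Fintype.card F - 1) = 1 ∨ α ^ (Fintype.card F + 1) = 1 ↔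
      α ^ Fintype.card F = α ∨ α ^ Fintype.card F = α⁻¹ := by
    have hsucc : α ^ Fintype.card F = α ^ (Fintype.card F - 1) * α := by
      rw [← pow_succ, Nat.sub_add_cancel Fintype.card_pos]
    rw [pow_succ, mul_eq_one_iff_eq_inv, hsucc, mul_eq_right]
  ext x
  simp only [Set.mem_image, Set.mem_ofPred_eq, hW]
  constructor
  · rintro ⟨a, rfl⟩
    obtain ⟨α, hα⟩ := IsAlgClosed.exists_joukowski_eq (algebraMap F K a)
    refine ⟨α, ?_, hα⟩
    have := congrArg (frobeniusAlgHom F K) hα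
    rwa [frobeniusAlgHom_joukowski, AlgHom.commutes, ← hα, joukowski_eq_joukowski_iff] at this
  · rintro ⟨α, hα, rfl⟩
    apply mem_range_of_pow_card_eq_self
    rw [← frobeniusAlgHom_apply, frobeniusAlgHom_joukowski]
    rcases hα with hα | hα <;> simp [hα, joukowski_inv]

theorem algebraMap_image_periodicPts_dickson [IsAlgClosed K] {n ν₀ ω₀ ν₁ ω₁ : ℕ}
    (h₀ : IsNDecomposition n (Fintype.card F - 1) ν₀ ω₀)
    (h₁ : IsNDecomposition n (Fintype.card F + 1) ν₁ ω₁) :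
    algebraMap F K '' periodicPts (fun x : F => (dickson 1 (1 : F) n).eval x) =
      joukowski '' ({α : Kˣ | α ^ ω₀ = 1} ∪ {α | α ^ ω₁ = 1}) := by
  have hsemiconj : Semiconj (algebraMap F K) (fun x : F => (dickson 1 (1 : F) n).eval x)
      (fun x : K => (dickson 1 (1 : K) n).eval x) := fun x => by
    dsimp only
    rw [← map_one (algebraMap F K), ← map_dickson, eval_map, eval₂_hom]
  rw [hsemiconj.image_periodicPts (algebraMap F K).injective, range_algebraMap_eq_image_joukowski,
    ← Set.image_inter_preimage]
  congr 1
  ext α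
  simp only [Set.mem_inter_iff, Set.mem_ofPred_eq, Set.mem_preimage, joukowski_mem_periodicPts_iff,
    Set.mem_union, h₀.pow_eq_one_iff, h₁.pow_eq_one_iff, or_and_right]

end FiniteField

theorem chebyshev_card_periodic_points_general (n q ν₀ ω₀ ν₁ ω₁ : ℕ)
    (F : Type*) [Field F] [Fintype F] (hF : Fintype.card F = q)
    (h₀ : q - 1 = ν₀ * ω₀) (hν₀ : ∀ p : ℕ, p.Prime → p ∣ ν₀ → p ∣ n)
    (hω₀ : Nat.Coprime ω₀ n)
    (h₁ : q + 1 = ν₁ * ω₁) (hν₁ : ∀ p : ℕ, p.Prime → p ∣ ν₁ → p ∣ n)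
    (hω₁ : Nat.Coprime ω₁ n) :
    Nat.card {a : F // ∃ k > 0,
        (fun x : F => (Polynomial.dickson 1 (1 : F) n).eval x)^[k] a = a} =
      (ω₀ + ω₁) / 2 := by
  subst hF
  have hd₀ : IsNDecomposition n (Fintype.card F - 1) ν₀ ω₀ := ⟨h₀, hν₀, hω₀⟩
  have hd₁ : IsNDecomposition n (Fintype.card F + 1) ν₁ ω₁ := ⟨h₁, hν₁, hω₁⟩
  let K := AlgebraicClosure F
  let A : Set Kˣ := {α | α ^ ω₀ = 1}
  let B : Set Kˣ := {α | α ^ ω₁ = 1}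
  have hω₀K : (ω₀ : K) ≠ 0 := by
    simpa only [map_natCast] using (map_ne_zero (algebraMap F K)).2 <|
      FiniteField.natCast_ne_zero_of_dvd_card_sub_one (Dvd.intro_left _ h₀.symm)
  have hω₁K : (ω₁ : K) ≠ 0 := by
    simpa only [map_natCast] using (map_ne_zero (algebraMap F K)).2 <|
      FiniteField.natCast_ne_zero_of_dvd_card_add_one (Dvd.intro_left _ h₁.symm)
  have hA : A.ncard = ω₀ := IsAlgClosed.ncard_setOf_pow_eq_one hω₀K
  have hB : B.ncard = ω₁ := IsAlgClosed.ncard_setOf_pow_eq_one hω₁K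
  have hAfin : A.Finite := Set.finite_of_ncard_ne_zero (hA ▸ fun h => hω₀K (by simp [h]))
  have hBfin : B.Finite := Set.finite_of_ncard_ne_zero (hB ▸ fun h => hω₁K (by simp [h]))
  have hcount := Set.two_mul_ncard_image_eq_ncard_add_ncard_inv_eq_self
    (fun _ _ => joukowski_eq_joukowski_iff) (hAfin.union hBfin)
    (fun α hα => by simpa [A, B, inv_pow] using hα)
  rw [← FiniteField.algebraMap_image_periodicPts_dickson hd₀ hd₁,
    Set.ncard_image_of_injective _ (algebraMap F K).injective,
    hd₀.sep_inv_eq_self_eq_inter Fintype.card_pos hd₁ Kˣ,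
    Set.ncard_union_add_ncard_inter A B hAfin hBfin, hA, hB] at hcount
  change Nat.card (periodicPts _) = _
  rw [Nat.card_coe_set_eq]
  omega

/-- Let `q - 1 = ν₀·ω₀` and `q + 1 = ν₁·ω₁` be the `n`-decompositions (every prime of
`νᵢ` divides `n`, and `gcd(ωᵢ, n) = 1`).  Then the number of periodic points of the
Chebyshev map `T_n` on the field `F_q` equals `(ω₀ + ω₁)/2`. -/
theorem chebyshev_card_periodic_points (n q ν₀ ω₀ ν₁ ω₁ : ℕ) (hn : 0 < n)
    (F : Type*) [Field F] [Fintype F] (hF : Fintype.card F = q)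
    (h₀ : q - 1 = ν₀ * ω₀) (hν₀ : ∀ p : ℕ, p.Prime → p ∣ ν₀ → p ∣ n)
    (hω₀ : Nat.Coprime ω₀ n)
    (h₁ : q + 1 = ν₁ * ω₁) (hν₁ : ∀ p : ℕ, p.Prime → p ∣ ν₁ → p ∣ n)
    (hω₁ : Nat.Coprime ω₁ n) :
    Nat.card {a : F // ∃ k > 0,
        (fun x : F => (Polynomial.dickson 1 (1 : F) n).eval x)^[k] a = a} =
      (ω₀ + ω₁) / 2 :=
  chebyshev_card_periodic_points_general n q ν₀ ω₀ ν₁ ω₁ F hF h₀ hν₀ hω₀ h₁ hν₁ hω₁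
end
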